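/- arXiv:2111.03944 — 4 statements merged into one kernel-verified Lean document; each statement's English description precedes it below -/
import Mathlib

section
/- Define weights on monomials in variables u, v and operation symbols by wt(u) = wt(v) = 1, wt(Q₁^k x) = p^k · wt(x), wt(β Q₁^k x) = p^k · wt(x), wt(λ(x,y)) = wt(x) + wt(y), and assign degrees |u| = 2n−2, |v| = 2n−1, |Q₁ x| = p|x| + p − 1, |β Q₁ x| = p|x| + p − 2, |λ(x,y)| = |x| + |y| + 1. Then among all weight-p^k monomials (products of generators with weights summing to p^k), the minimal degree is (2n−2)p^k, achieved by u^{p^k}, and the maximal degree is 2np^k − 1, achieved by Q₁^k v. -/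
/-- Formal generators of the free E₂-algebra on two classes `u`, `v`:
they are built from `u`, `v` by the Browder bracket `λ` and the Dyer–Lashof
operations `Q₁`, `βQ₁`. -/
inductive Gen : Type
  | u : Gen
  | v : Gen
  | Q1 : Gen → Gen
  | bQ1 : Gen → Gen
  | lam : Gen → Gen → Gen

namespace Gen

/-- Weight: `wt(u) = wt(v) = 1`, `wt(Q₁x) = wt(βQ₁x) = p·wt(x)`
(so `wt(Q₁^k x) = wt(βQ₁^k x) = p^k wt(x)`), `wt(λ(x,y)) = wt(x) + wt(y)`. -/
def wt (p : ℕ) : Gen → ℕ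
  | u => 1
  | v => 1
  | Q1 x => p * x.wt p
  | bQ1 x => p * x.wt p
  | lam x y => x.wt p + y.wt p

/-- Degree: `|u| = 2n−2`, `|v| = 2n−1`, `|Q₁x| = p|x| + p − 1`, `|βQ₁x| = p|x| + p − 2`,
`|λ(x,y)| = |x| + |y| + 1`. -/
def deg (p n : ℕ) : Gen → ℕ
  | u => 2 * n - 2
  | v => 2 * n - 1
  | Q1 x => p * x.deg p n + p - 1
  | bQ1 x => p * x.deg p n + p - 2
  | lam x y => x.deg p n + y.deg p n + 1

end Gen

lemma gen_lower (p n : ℕ) (hp : 2 ≤ p) (hn : 1 < n) (g : Gen) :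
    (2 * n - 2) * g.wt p ≤ g.deg p n := by
  induction g with
  | u => simp [Gen.wt, Gen.deg]
  | v => simp [Gen.wt, Gen.deg]; omega
  | Q1 x ih =>
      simp only [Gen.wt, Gen.deg]
      have : p * ((2 * n - 2) * x.wt p) ≤ p * x.deg p n := Nat.mul_le_mul_left _ ih
      calc (2 * n - 2) * (p * x.wt p) = p * ((2 * n - 2) * x.wt p) := by ring
        _ ≤ p * x.deg p n := this
        _ ≤ p * x.deg p n + p - 1 := by omega
  | bQ1 x ih =>
      simp only [Gen.wt, Gen.deg]
      have : p * ((2 * n - 2) * x.wt p) ≤ p * x.deg p n := Nat.mul_le_mul_left _ ih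
      calc (2 * n - 2) * (p * x.wt p) = p * ((2 * n - 2) * x.wt p) := by ring
        _ ≤ p * x.deg p n := this
        _ ≤ p * x.deg p n + p - 2 := by omega
  | lam x y ihx ihy =>
      simp only [Gen.wt, Gen.deg, Nat.mul_add]
      omega

lemma gen_upper (p n : ℕ) (hp : 2 ≤ p) (hn : 1 < n) (g : Gen) :
    g.deg p n + 1 ≤ 2 * n * g.wt p := by
  induction g with
  | u => simp [Gen.wt, Gen.deg]; omega
  | v => simp [Gen.wt, Gen.deg]; omega
  | Q1 x ih =>
      simp only [Gen.wt, Gen.deg]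
      have : p * (x.deg p n + 1) ≤ p * (2 * n * x.wt p) := Nat.mul_le_mul_left _ ih
      have h2 : p * (2 * n * x.wt p) = 2 * n * (p * x.wt p) := by ring
      have h3 : p * (x.deg p n + 1) = p * x.deg p n + p := by ring
      omega
  | bQ1 x ih =>
      simp only [Gen.wt, Gen.deg]
      have : p * (x.deg p n + 1) ≤ p * (2 * n * x.wt p) := Nat.mul_le_mul_left _ ih
      have h2 : p * (2 * n * x.wt p) = 2 * n * (p * x.wt p) := by ring
      have h3 : p * (x.deg p n + 1) = p * x.deg p n + p := by ring
      omega
  | lam x y ihx ihy =>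
      simp only [Gen.wt, Gen.deg, Nat.mul_add]
      omega

lemma list_lower (p n : ℕ) (hp : 2 ≤ p) (hn : 1 < n) (m : List Gen) :
    (2 * n - 2) * (m.map (Gen.wt p)).sum ≤ (m.map (Gen.deg p n)).sum := by
  induction m with
  | nil => simp
  | cons a t ih =>
      simp only [List.map_cons, List.sum_cons, Nat.mul_add]
      exact Nat.add_le_add (gen_lower p n hp hn a) ih

lemma list_upper (p n : ℕ) (hp : 2 ≤ p) (hn : 1 < n) (m : List Gen) :
    (m.map (Gen.deg p n)).sum + m.length ≤ 2 * n * (m.map (Gen.wt p)).sum := by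
  induction m with
  | nil => simp
  | cons a t ih =>
      simp only [List.map_cons, List.sum_cons, List.length_cons, Nat.mul_add]
      have := gen_upper p n hp hn a
      omega

/-- With the weight and degree conventions above (`p` prime, `n > 1`,
`k ≥ 0`), a monomial is a (nonempty) product of generators, with weight and degree
additive.  Every monomial of total weight `p^k` has degree `d` with
`(2n−2)p^k ≤ d ≤ 2np^k − 1`; the minimal degree `(2n−2)p^k` is achieved by `u^{p^k}` and
the maximal degree `2np^k − 1` is achieved by `Q₁^k v`. -/
theorem stmt_7 (p n k : ℕ) (hp : p.Prime) (hn : 1 < n) :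
    (∀ m : List Gen, m ≠ [] → (m.map (Gen.wt p)).sum = p ^ k →
        (2 * n - 2) * p ^ k ≤ (m.map (Gen.deg p n)).sum ∧
        (m.map (Gen.deg p n)).sum ≤ 2 * n * p ^ k - 1) ∧
    ((List.replicate (p ^ k) Gen.u).map (Gen.wt p)).sum = p ^ k ∧
    ((List.replicate (p ^ k) Gen.u).map (Gen.deg p n)).sum = (2 * n - 2) * p ^ k ∧
    Gen.wt p (Gen.Q1^[k] Gen.v) = p ^ k ∧
    Gen.deg p n (Gen.Q1^[k] Gen.v) = 2 * n * p ^ k - 1 := by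
  have hp2 : 2 ≤ p := hp.two_le
  refine ⟨?_, ?_, ?_, ?_, ?_⟩
  · intro m hne hwt
    constructor
    · have := list_lower p n hp2 hn m
      rw [hwt] at this; exact this
    · have := list_upper p n hp2 hn m
      rw [hwt] at this
      have hlen : 1 ≤ m.length := by
        cases m with
        | nil => exact absurd rfl hne
        | cons a t => simp
      omega
  · simp [List.map_replicate, List.sum_replicate, Gen.wt, Nat.smul_one_eq_cast]
  · simp [List.map_replicate, List.sum_replicate, Gen.wt, Gen.deg, smul_eq_mul, Nat.mul_comm]
  · induction k with
    | zero => simp [Gen.wt]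
    | succ j ih =>
        rw [Function.iterate_succ_apply', Gen.wt, ih, pow_succ]
        ring
  · have key : ∀ j, Gen.deg p n (Gen.Q1^[j] Gen.v) + 1 = 2 * n * p ^ j := by
      intro j
      induction j with
      | zero => simp [Gen.deg]; omega
      | succ j ih =>
          rw [Function.iterate_succ_apply', Gen.deg]
          have h2 : 2 * n * p ^ (j + 1) = p * (2 * n * p ^ j) := by
            rw [pow_succ]; ring
          have h3 : p * (Gen.deg p n (Gen.Q1^[j] Gen.v) + 1)
              = p * (Gen.deg p n (Gen.Q1^[j] Gen.v)) + p := by ring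
          have h4 : p * (Gen.deg p n (Gen.Q1^[j] Gen.v) + 1)
              = p * (2 * n * p ^ j) := by rw [ih]
          omega
    have := key k
    omega
end

section
/- With the weight and degree conventions of the free E₂-algebra on classes u (degree 2n−2) and v (degree 2n−1) with n > 1 and p an odd prime: the only monomial of weight p^k (k ≥ 1) in degree 2np^k − 1 is Q₁^k v, and the only monomials of weight p^k in degree 2np^k − 2 are βQ₁^k v and the iterated bracket ad_λ^{p^k−1}(v)(u) = λ(v, λ(v, …, λ(v,u)…)). -/
/-- Formal basis generators of the free E₂-algebra on `u` (degree `2n−2`) and `v`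
(degree `2n−1`): iterated (right-normed) Browder brackets `λ(v, x)` and the operations
`Q₁`, `βQ₁`. -/
inductive G8 : Type
  | u : G8
  | v : G8
  | adv : G8 → G8   -- the Browder bracket λ(v, x)
  | Q1 : G8 → G8
  | bQ1 : G8 → G8

namespace G8

/-- Weight: `wt(u) = wt(v) = 1`, `wt(λ(v,x)) = 1 + wt(x)`, `wt(Q₁x) = wt(βQ₁x) = p·wt(x)`. -/
def wt (p : ℕ) : G8 → ℕ
  | u => 1
  | v => 1
  | adv x => 1 + x.wt p
  | Q1 x => p * x.wt p
  | bQ1 x => p * x.wt p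

/-- Degree: `|u| = 2n−2`, `|v| = 2n−1`, `|λ(v,x)| = (2n−1) + |x| + 1`,
`|Q₁x| = p|x|+p−1`, `|βQ₁x| = p|x|+p−2`. -/
def deg (p n : ℕ) : G8 → ℕ
  | u => 2 * n - 2
  | v => 2 * n - 1
  | adv x => (2 * n - 1) + x.deg p n + 1
  | Q1 x => p * x.deg p n + p - 1
  | bQ1 x => p * x.deg p n + p - 2

/-- Browder brackets are formed only on iterated Lie (bracket) words in `u`, `v`. -/
def isLie : G8 → Bool
  | u => true
  | v => true
  | adv x => x.isLie
  | Q1 _ => false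
  | bQ1 _ => false

/-- Whether the bracket word involves `u`: a nonzero iterated Browder bracket must
involve `u`, since `λ(v,v) = 0`. -/
def usesU : G8 → Bool
  | u => true
  | v => false
  | adv x => x.usesU
  | Q1 x => x.usesU
  | bQ1 x => x.usesU

/-- Admissible (potentially nonzero) basis generators: `u`, `v`; brackets `λ(v,x)` of
admissible Lie words involving `u` (those not involving `u` vanish since `λ(v,v) = 0`);
and `Q₁`, `βQ₁` applied to admissible classes of odd degree. -/
def Adm (p n : ℕ) : G8 → Prop
  | u => True
  | v => True
  | adv x => Adm p n x ∧ x.isLie = true ∧ x.usesU = true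
  | Q1 x => Adm p n x ∧ Odd (x.deg p n)
  | bQ1 x => Adm p n x ∧ Odd (x.deg p n)

end G8


namespace G8
variable {p n : ℕ}

lemma deg_lt (hp1 : 1 ≤ p) (hn : 1 ≤ n) : ∀ g : G8, g.deg p n + 1 ≤ 2 * n * g.wt p := by
  intro g
  induction g with
  | u => simp only [deg, wt, Nat.mul_one]; omega
  | v => simp only [deg, wt, Nat.mul_one]; omega
  | adv x ih =>
    simp only [deg, wt]
    rw [show 2 * n * (1 + x.wt p) = 2 * n + 2 * n * x.wt p from by ring]
    generalize 2 * n * x.wt p = T at ih ⊢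
    omega
  | Q1 x ih =>
    simp only [deg, wt]
    have h2 : p * x.deg p n + p ≤ 2 * n * (p * x.wt p) := by
      calc p * x.deg p n + p = p * (x.deg p n + 1) := by ring
        _ ≤ p * (2 * n * x.wt p) := Nat.mul_le_mul_left p ih
        _ = 2 * n * (p * x.wt p) := by ring
    generalize p * x.deg p n = A at h2 ⊢
    generalize 2 * n * (p * x.wt p) = B at h2 ⊢
    omega
  | bQ1 x ih =>
    simp only [deg, wt]
    have h2 : p * x.deg p n + p ≤ 2 * n * (p * x.wt p) := by
      calc p * x.deg p n + p = p * (x.deg p n + 1) := by ring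
        _ ≤ p * (2 * n * x.wt p) := Nat.mul_le_mul_left p ih
        _ = 2 * n * (p * x.wt p) := by ring
    generalize p * x.deg p n = A at h2 ⊢
    generalize 2 * n * (p * x.wt p) = B at h2 ⊢
    omega

lemma lie_classify (hn : 1 ≤ n) : ∀ g : G8, g.isLie = true → g.usesU = true →
    g.deg p n + 2 = 2 * n * g.wt p ∧ ∃ j, g = adv^[j] u ∧ g.wt p = j + 1 := by
  intro g
  induction g with
  | u =>
    intro _ _
    refine ⟨by simp only [deg, wt, Nat.mul_one]; omega, 0, rfl, rfl⟩
  | v => intro _ hu; simp [usesU] at hu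
  | adv x ih =>
    intro hl hu
    simp only [isLie] at hl
    simp only [usesU] at hu
    obtain ⟨hd, j, hx, hw⟩ := ih hl hu
    refine ⟨?_, j + 1, ?_, ?_⟩
    · simp only [deg, wt]
      rw [show 2 * n * (1 + x.wt p) = 2 * n + 2 * n * x.wt p from by ring, ← hd]
      omega
    · rw [Function.iterate_succ_apply', hx]
    · simp only [wt, hw]; omega
  | Q1 x ih => intro hl _; simp [isLie] at hl
  | bQ1 x ih => intro hl _; simp [isLie] at hl

lemma d1_classify (hp3 : 3 ≤ p) (hn : 1 ≤ n) : ∀ g : G8, g.Adm p n →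
    g.deg p n + 1 = 2 * n * g.wt p → ∃ j, g = Q1^[j] v ∧ g.wt p = p ^ j := by
  intro g
  induction g with
  | u =>
    intro _ h
    exfalso
    simp only [deg, wt, Nat.mul_one] at h
    omega
  | v => intro _ _; exact ⟨0, rfl, rfl⟩
  | adv x ih =>
    intro ha h
    exfalso
    obtain ⟨hax, hl, hu⟩ := ha
    obtain ⟨hd, -⟩ := lie_classify (p := p) hn x hl hu
    simp only [deg, wt] at h
    rw [show 2 * n * (1 + x.wt p) = 2 * n + 2 * n * x.wt p from by ring, ← hd] at h
    omega
  | Q1 x ih =>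
    intro ha h
    obtain ⟨hax, -⟩ := ha
    simp only [deg, wt] at h
    have h1 : 1 ≤ p * x.deg p n + p := le_trans (by omega) (Nat.le_add_left p _)
    rw [Nat.sub_add_cancel h1] at h
    have h2 : p * (x.deg p n + 1) = p * (2 * n * x.wt p) := by
      rw [Nat.mul_add, Nat.mul_one, h]; ring
    have h3 := Nat.eq_of_mul_eq_mul_left (by omega : 0 < p) h2
    obtain ⟨j, hj, hwj⟩ := ih hax h3
    refine ⟨j + 1, ?_, ?_⟩
    · rw [Function.iterate_succ_apply', hj]
    · simp only [wt, hwj, pow_succ]; ring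
  | bQ1 x ih =>
    intro ha h
    exfalso
    simp only [deg, wt] at h
    have dB : p ∣ 2 * n * (p * x.wt p) := ⟨2 * n * x.wt p, by ring⟩
    have dA : p ∣ p * x.deg p n + p := Dvd.dvd.add (dvd_mul_right p _) dvd_rfl
    have key : p * x.deg p n + p - 2 * n * (p * x.wt p) = 1 := by
      generalize p * x.deg p n = A at h ⊢
      generalize 2 * n * (p * x.wt p) = B at h ⊢
      omega
    have hd1 := Nat.dvd_sub dA dB
    rw [key] at hd1
    have := Nat.le_of_dvd one_pos hd1
    omega

lemma d2_classify (hp3 : 3 ≤ p) (hn : 1 ≤ n) : ∀ g : G8, g.Adm p n →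
    g.deg p n + 2 = 2 * n * g.wt p →
    (∃ j, g = adv^[j] u ∧ g.wt p = j + 1) ∨
    (∃ j, g = bQ1 (Q1^[j] v) ∧ g.wt p = p ^ (j + 1)) := by
  intro g
  induction g with
  | u => intro _ _; exact Or.inl ⟨0, rfl, rfl⟩
  | v =>
    intro _ h
    exfalso
    simp only [deg, wt, Nat.mul_one] at h
    omega
  | adv x ih =>
    intro ha _
    obtain ⟨hax, hl, hu⟩ := ha
    obtain ⟨-, j, hx, hw⟩ := lie_classify (p := p) hn x hl hu
    refine Or.inl ⟨j + 1, ?_, ?_⟩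
    · rw [Function.iterate_succ_apply', hx]
    · simp only [wt, hw]; omega
  | Q1 x ih =>
    intro ha h
    exfalso
    simp only [deg, wt] at h
    have dB : p ∣ 2 * n * (p * x.wt p) := ⟨2 * n * x.wt p, by ring⟩
    have dA : p ∣ p * x.deg p n + p := Dvd.dvd.add (dvd_mul_right p _) dvd_rfl
    have key : 2 * n * (p * x.wt p) - (p * x.deg p n + p) = 1 := by
      generalize p * x.deg p n = A at h ⊢
      generalize 2 * n * (p * x.wt p) = B at h ⊢
      omega
    have hd1 := Nat.dvd_sub dB dA
    rw [key] at hd1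
    have := Nat.le_of_dvd one_pos hd1
    omega
  | bQ1 x ih =>
    intro ha h
    obtain ⟨hax, -⟩ := ha
    simp only [deg, wt] at h
    have h1 : p * x.deg p n + p = 2 * n * (p * x.wt p) := by
      generalize p * x.deg p n = A at h ⊢
      generalize 2 * n * (p * x.wt p) = B at h ⊢
      omega
    have h2 : p * (x.deg p n + 1) = p * (2 * n * x.wt p) := by
      rw [Nat.mul_add, Nat.mul_one, h1]; ring
    have h3 := Nat.eq_of_mul_eq_mul_left (by omega : 0 < p) h2
    obtain ⟨j, hj, hwj⟩ := d1_classify hp3 hn x hax h3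
    refine Or.inr ⟨j, by rw [hj], ?_⟩
    simp only [wt, hwj, pow_succ]; ring


lemma list_bound (hp1 : 1 ≤ p) (hn : 1 ≤ n) : ∀ m : List G8,
    (m.map (deg p n)).sum + m.length ≤ 2 * n * (m.map (wt p)).sum := by
  intro m
  induction m with
  | nil => simp
  | cons g t ih =>
    simp only [List.map_cons, List.sum_cons, List.length_cons]
    have hg := deg_lt (p := p) hp1 hn g
    rw [show 2 * n * (g.wt p + (t.map (wt p)).sum)
        = 2 * n * g.wt p + 2 * n * (t.map (wt p)).sum from by ring]
    generalize 2 * n * g.wt p = A at hg ⊢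
    generalize 2 * n * (t.map (wt p)).sum = B at ih ⊢
    omega

lemma Qv_facts (hp3 : 3 ≤ p) (hn : 1 ≤ n) : ∀ j, Adm p n (Q1^[j] v) ∧
    wt p (Q1^[j] v) = p ^ j ∧ deg p n (Q1^[j] v) + 1 = 2 * n * p ^ j := by
  intro j
  induction j with
  | zero =>
    refine ⟨trivial, rfl, ?_⟩
    simp only [Function.iterate_zero, id_eq, deg, pow_zero, Nat.mul_one]
    omega
  | succ j ih =>
    obtain ⟨ha, hw, hd⟩ := ih
    rw [Function.iterate_succ_apply']
    have key : p * ((Q1^[j] v).deg p n) + p = 2 * n * p ^ (j + 1) := by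
      calc p * ((Q1^[j] v).deg p n) + p = p * ((Q1^[j] v).deg p n + 1) := by ring
        _ = p * (2 * n * p ^ j) := by rw [hd]
        _ = 2 * n * p ^ (j + 1) := by rw [pow_succ]; ring
    refine ⟨⟨ha, ?_⟩, ?_, ?_⟩
    · rw [Nat.odd_iff]
      rw [show 2 * n * p ^ j = 2 * (n * p ^ j) from by ring] at hd
      have h3 : 1 ≤ n * p ^ j := Nat.mul_pos (by omega) (Nat.pow_pos (by omega))
      generalize n * p ^ j = M at hd h3
      omega
    · simp only [wt, hw, pow_succ]; ring
    · simp only [deg]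
      generalize p * ((Q1^[j] v).deg p n) = A at key ⊢
      generalize 2 * n * p ^ (j + 1) = B at key ⊢
      omega

lemma advU_facts (hn : 1 ≤ n) : ∀ j, Adm p n (adv^[j] u) ∧
    (adv^[j] u).isLie = true ∧ (adv^[j] u).usesU = true ∧
    wt p (adv^[j] u) = j + 1 ∧ deg p n (adv^[j] u) + 2 = 2 * n * (j + 1) := by
  intro j
  induction j with
  | zero =>
    refine ⟨trivial, rfl, rfl, rfl, ?_⟩
    simp only [Function.iterate_zero, id_eq, deg, Nat.zero_add, Nat.mul_one]
    omega
  | succ j ih =>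
    obtain ⟨ha, hl, hu, hw, hd⟩ := ih
    rw [Function.iterate_succ_apply']
    refine ⟨⟨ha, hl, hu⟩, by simp only [isLie]; exact hl, by simp only [usesU]; exact hu, ?_, ?_⟩
    · simp only [wt, hw]; omega
    · simp only [deg]
      rw [show 2 * n * (j + 1 + 1) = 2 * n * (j + 1) + 2 * n from by ring, ← hd]
      omega

end G8

/-- With the weight and degree conventions of the free E₂-algebra on
classes `u` (degree `2n−2`) and `v` (degree `2n−1`), `n > 1`, `p` an odd prime, `k ≥ 1`:
the only monomial of weight `p^k` in degree `2np^k − 1` is `Q₁^k v`, and the only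
monomials of weight `p^k` in degree `2np^k − 2` are `βQ₁^k v = βQ₁(Q₁^{k-1} v)` and the
iterated bracket `ad_λ^{p^k−1}(v)(u) = λ(v, λ(v, …, λ(v,u)…))`.
(Monomials are nonempty products of admissible basis generators; weight and degree are
additive on products.) -/
theorem stmt_8 (p n k : ℕ) (hp : p.Prime) (hodd : Odd p) (hn : 1 < n) (hk : 1 ≤ k) :
    (∀ m : List G8, m ≠ [] → (∀ g ∈ m, G8.Adm p n g) →
        (m.map (G8.wt p)).sum = p ^ k →
        ((m.map (G8.deg p n)).sum = 2 * n * p ^ k - 1 → m = [G8.Q1^[k] G8.v]) ∧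
        ((m.map (G8.deg p n)).sum = 2 * n * p ^ k - 2 →
          m = [G8.bQ1 (G8.Q1^[k - 1] G8.v)] ∨ m = [G8.adv^[p ^ k - 1] G8.u])) ∧
    G8.Adm p n (G8.Q1^[k] G8.v) ∧
    G8.wt p (G8.Q1^[k] G8.v) = p ^ k ∧
    G8.deg p n (G8.Q1^[k] G8.v) = 2 * n * p ^ k - 1 ∧
    G8.Adm p n (G8.bQ1 (G8.Q1^[k - 1] G8.v)) ∧
    G8.wt p (G8.bQ1 (G8.Q1^[k - 1] G8.v)) = p ^ k ∧
    G8.deg p n (G8.bQ1 (G8.Q1^[k - 1] G8.v)) = 2 * n * p ^ k - 2 ∧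
    G8.Adm p n (G8.adv^[p ^ k - 1] G8.u) ∧
    G8.wt p (G8.adv^[p ^ k - 1] G8.u) = p ^ k ∧
    G8.deg p n (G8.adv^[p ^ k - 1] G8.u) = 2 * n * p ^ k - 2 := by
  have hp2 : 2 ≤ p := hp.two_le
  have hp3 : 3 ≤ p := by have := Nat.odd_iff.mp hodd; omega
  have hn1 : 1 ≤ n := le_of_lt hn
  have hpk1 : 1 ≤ p ^ k := Nat.one_le_pow k p (by omega)
  have hT2 : 2 ≤ 2 * n * p ^ k := by
    have h := Nat.mul_le_mul (show 2 ≤ 2 * n by omega) hpk1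
    simpa using h
  refine ⟨?_, ?_⟩
  · intro m hne hadm hwt
    have LB := G8.list_bound (p := p) (n := n) (by omega) hn1 m
    rw [hwt] at LB
    have hlen : 1 ≤ m.length := List.length_pos_iff.mpr hne
    constructor
    · intro hdeg
      have hm1 : m.length = 1 := by
        generalize 2 * n * p ^ k = T at LB hdeg hT2
        omega
      obtain ⟨g, rfl⟩ := List.length_eq_one_iff.mp hm1
      simp only [List.map_cons, List.map_nil, List.sum_cons, List.sum_nil,
        Nat.add_zero] at hwt hdeg
      have hA := G8.deg_lt (p := p) (n := n) (by omega) hn1 g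
      rw [hwt] at hA
      have heq : g.deg p n + 1 = 2 * n * g.wt p := by
        rw [hwt]
        generalize 2 * n * p ^ k = T at hA hdeg hT2 ⊢
        omega
      obtain ⟨j, rfl, hwj⟩ := G8.d1_classify hp3 hn1 g (hadm g (by simp)) heq
      have hjk : j = k := Nat.pow_right_injective hp2 (show p ^ j = p ^ k by rw [← hwj, hwt])
      rw [hjk]
    · intro hdeg
      have hlen2 : m.length ≤ 2 := by
        generalize 2 * n * p ^ k = T at LB hdeg hT2
        omega
      rcases m with _ | ⟨g, t⟩
      · exact absurd rfl hne
      rcases t with _ | ⟨h2, t2⟩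
      · simp only [List.map_cons, List.map_nil, List.sum_cons, List.sum_nil,
          Nat.add_zero] at hwt hdeg
        have hA := G8.deg_lt (p := p) (n := n) (by omega) hn1 g
        rw [hwt] at hA
        have heq : g.deg p n + 2 = 2 * n * g.wt p := by
          rw [hwt]
          generalize 2 * n * p ^ k = T at hA hdeg hT2 ⊢
          omega
        rcases G8.d2_classify hp3 hn1 g (hadm g (by simp)) heq with
          ⟨j, rfl, hwj⟩ | ⟨j, rfl, hwj⟩
        · right
          have hj : j = p ^ k - 1 := by
            rw [hwj] at hwt
            generalize p ^ k = P at hwt hpk1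
            omega
          rw [hj]
        · left
          have hjk : j + 1 = k := Nat.pow_right_injective hp2 (show p ^ (j + 1) = p ^ k by rw [← hwj, hwt])
          have hj : j = k - 1 := by omega
          rw [hj]
      · have ht2 : t2 = [] := by
          simp only [List.length_cons] at hlen2
          exact List.length_eq_zero_iff.mp (by omega)
        subst ht2
        exfalso
        simp only [List.map_cons, List.map_nil, List.sum_cons, List.sum_nil,
          Nat.add_zero] at hwt hdeg
        have hA := G8.deg_lt (p := p) (n := n) (by omega) hn1 g
        have hB := G8.deg_lt (p := p) (n := n) (by omega) hn1 h2
        have hTw : 2 * n * (g.wt p + h2.wt p) = 2 * n * p ^ k := by rw [hwt]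
        rw [show 2 * n * (g.wt p + h2.wt p) = 2 * n * g.wt p + 2 * n * h2.wt p
          from by ring] at hTw
        have e1 : g.deg p n + 1 = 2 * n * g.wt p ∧ h2.deg p n + 1 = 2 * n * h2.wt p := by
          generalize 2 * n * g.wt p = A at hA hTw ⊢
          generalize 2 * n * h2.wt p = B at hB hTw ⊢
          generalize 2 * n * p ^ k = T at hTw hdeg hT2
          omega
        obtain ⟨j1, hg1, hw1⟩ := G8.d1_classify hp3 hn1 g (hadm g (by simp)) e1.1
        obtain ⟨j2, hg2, hw2⟩ := G8.d1_classify hp3 hn1 h2 (hadm h2 (by simp)) e1.2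
        rw [hw1, hw2] at hwt
        obtain ⟨a, ha⟩ := (hodd.pow : Odd (p ^ j1))
        obtain ⟨b, hb⟩ := (hodd.pow : Odd (p ^ j2))
        obtain ⟨c, hc⟩ := (hodd.pow : Odd (p ^ k))
        omega
  · obtain ⟨haQ, hwQ, hdQ⟩ := G8.Qv_facts (p := p) (n := n) hp3 hn1 k
    obtain ⟨haQ', hwQ', hdQ'⟩ := G8.Qv_facts (p := p) (n := n) hp3 hn1 (k - 1)
    obtain ⟨haA, -, -, hwA, hdA⟩ := G8.advU_facts (p := p) (n := n) hn1 (p ^ k - 1)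
    have hkk : k - 1 + 1 = k := by omega
    have hps : p * p ^ (k - 1) = p ^ k := by
      conv_rhs => rw [← hkk]
      rw [pow_succ]; ring
    have keyb : p * ((G8.Q1^[k - 1] G8.v).deg p n) + p = 2 * n * p ^ k := by
      calc p * ((G8.Q1^[k - 1] G8.v).deg p n) + p
          = p * ((G8.Q1^[k - 1] G8.v).deg p n + 1) := by ring
        _ = p * (2 * n * p ^ (k - 1)) := by rw [hdQ']
        _ = 2 * n * (p * p ^ (k - 1)) := by ring
        _ = 2 * n * p ^ k := by rw [hps]
    refine ⟨haQ, hwQ, Nat.eq_sub_of_add_eq hdQ, ⟨haQ', ?_⟩, ?_, ?_, haA, ?_, ?_⟩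
    · rw [Nat.odd_iff]
      rw [show 2 * n * p ^ (k - 1) = 2 * (n * p ^ (k - 1)) from by ring] at hdQ'
      have h3 : 1 ≤ n * p ^ (k - 1) := Nat.mul_pos (by omega) (Nat.pow_pos (by omega))
      generalize n * p ^ (k - 1) = M at hdQ' h3
      omega
    · show p * (G8.Q1^[k - 1] G8.v).wt p = p ^ k
      rw [hwQ', hps]
    · show p * ((G8.Q1^[k - 1] G8.v).deg p n) + p - 2 = 2 * n * p ^ k - 2
      generalize p * ((G8.Q1^[k - 1] G8.v).deg p n) = A at keyb ⊢
      generalize 2 * n * p ^ k = B at keyb ⊢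
      omega
    · rw [hwA]
      generalize p ^ k = P at hpk1 ⊢
      omega
    · rw [Nat.sub_add_cancel hpk1] at hdA
      exact Nat.eq_sub_of_add_eq hdA
end

section
/- In the differential graded tensor algebra T(u,v) over Z/p (p odd) with |u| = 2n−1, |v| = 2n and derivation β with βv = u, βu = 0, the iterated commutator τ_k(v) = ad^{p^k−1}(v)(u) satisfies β(v^{p^k}) = τ_k(v) for all k ≥ 0. -/
/-- The tensor algebra `T(u,v)` over `ℤ/p` on two generators, realized as the monoid
algebra of the free monoid on the letters `u` (= `false`) and `v` (= `true`). -/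
noncomputable abbrev T12 (p : ℕ) := MonoidAlgebra (ZMod p) (FreeMonoid Bool)

/-- The generator `u`, of degree `2n−1` (odd). -/
noncomputable def uu (p : ℕ) : T12 p :=
  MonoidAlgebra.of (ZMod p) (FreeMonoid Bool) (FreeMonoid.of false)

/-- The generator `v`, of degree `2n` (even). -/
noncomputable def vv (p : ℕ) : T12 p :=
  MonoidAlgebra.of (ZMod p) (FreeMonoid Bool) (FreeMonoid.of true)

/-- `β` on basis words: `β` is the graded derivation with `βv = u`, `βu = 0`, so on words
`β(v·t) = u·t + v·β(t)` and `β(u·t) = −u·β(t)` (Koszul sign `(−1)^{|u|} = −1`, `|v|`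
even). -/
noncomputable def betaWord (p : ℕ) : List Bool → (FreeMonoid Bool →₀ ZMod p)
  | [] => 0
  | (b :: t) =>
      (if b then Finsupp.single (FreeMonoid.ofList (false :: t)) (1 : ZMod p) else 0)
        + (if b then (1 : ZMod p) else -1) •
            Finsupp.mapDomain (fun w : FreeMonoid Bool => FreeMonoid.ofList (b :: w.toList))
              (betaWord p t)

/-- The Bockstein derivation `β` on `T(u,v)` as a linear map. -/
noncomputable def beta12 (p : ℕ) : T12 p →ₗ[ZMod p] T12 p :=
  (Finsupp.lift (T12 p) (ZMod p) (FreeMonoid Bool)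
    (fun w => MonoidAlgebra.ofCoeff (betaWord p w.toList))).comp
    (MonoidAlgebra.coeffLinearEquiv (R := ZMod p) (S := ZMod p) (M := FreeMonoid Bool)).toLinearMap

-- helper lemmas
lemma beta12_single (p : ℕ) (w : FreeMonoid Bool) (c : ZMod p) :
    beta12 p (MonoidAlgebra.single w c : T12 p) = c • MonoidAlgebra.ofCoeff (betaWord p w.toList) := by
  rw [beta12, LinearMap.comp_apply]
  erw [Finsupp.lift_apply]
  exact Finsupp.sum_single_index (by simp)

lemma mul_eq_mapDomain (p : ℕ) (a : FreeMonoid Bool) (f : T12 p) :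
    (MonoidAlgebra.single a (1 : ZMod p) : T12 p) * f =
      MonoidAlgebra.ofCoeff (Finsupp.mapDomain (fun m => a * m) f.coeff) := by
  induction f using MonoidAlgebra.induction_linear with
  | zero => simp
  | add f g hf hg => rw [mul_add, hf, hg, MonoidAlgebra.coeff_add, Finsupp.mapDomain_add,
      MonoidAlgebra.ofCoeff_add]
  | single w c =>
      rw [MonoidAlgebra.coeff_single, Finsupp.mapDomain_single, MonoidAlgebra.ofCoeff_single]
      exact (MonoidAlgebra.single_mul_single _ _ _ _).trans (by rw [one_mul])

lemma cons_eq_of_mul (b : Bool) (m : FreeMonoid Bool) :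
    FreeMonoid.ofList (b :: m.toList) = FreeMonoid.of b * m := rfl

lemma beta12_v_mul (p : ℕ) (x : T12 p) :
    beta12 p (vv p * x) = uu p * x + vv p * beta12 p x := by
  induction x using MonoidAlgebra.induction_linear with
  | zero => simp
  | add f g hf hg => simp only [mul_add, map_add, hf, hg]; abel
  | single w c =>
      have hv : vv p * (MonoidAlgebra.single w c : T12 p) = MonoidAlgebra.single (FreeMonoid.of true * w) c := by
        rw [vv, MonoidAlgebra.of_apply, MonoidAlgebra.single_mul_single, one_mul]
      have hu : uu p * (MonoidAlgebra.single w c : T12 p) = MonoidAlgebra.single (FreeMonoid.of false * w) c := by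
        rw [uu, MonoidAlgebra.of_apply, MonoidAlgebra.single_mul_single, one_mul]
      rw [hv, hu, beta12_single, beta12_single]
      have ht : (FreeMonoid.of true * w).toList = true :: w.toList := rfl
      rw [ht]
      show c • MonoidAlgebra.ofCoeff (betaWord p (true :: w.toList)) = _
      rw [betaWord]
      simp only [if_pos, MonoidAlgebra.ofCoeff_add, smul_add, one_smul]
      congr 1
      · rw [← cons_eq_of_mul]
        rw [MonoidAlgebra.ofCoeff_single, MonoidAlgebra.smul_single, smul_eq_mul, mul_one]
      · rw [vv, MonoidAlgebra.of_apply, mul_smul_comm, mul_eq_mapDomain]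
        rfl

lemma beta12_one (p : ℕ) : beta12 p (1 : T12 p) = 0 := by
  have h1 : (1 : T12 p) = MonoidAlgebra.single (1 : FreeMonoid Bool) (1 : ZMod p) := rfl
  rw [h1, beta12_single]
  show (1 : ZMod p) • MonoidAlgebra.ofCoeff (betaWord p []) = 0
  simp [betaWord]

lemma beta12_v_pow (p m : ℕ) :
    beta12 p (vv p ^ m) =
      ∑ i ∈ Finset.range m, vv p ^ i * uu p * vv p ^ (m - 1 - i) := by
  induction m with
  | zero => simp [beta12_one]
  | succ m ih =>
      rw [pow_succ', beta12_v_mul, ih, Finset.mul_sum, Finset.sum_range_succ', add_comm]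
      congr 1
      · apply Finset.sum_congr rfl
        intro i _
        have he : m + 1 - 1 - (i + 1) = m - 1 - i := by omega
        rw [he, ← mul_assoc, ← mul_assoc, ← pow_succ']
      · simp

open LinearMap in
lemma iterate_comm_eq (p : ℕ) (a b : T12 p) (j : ℕ) :
    (fun y : T12 p => a * y - y * a)^[j] b =
      ((mulLeft (ZMod p) a - mulRight (ZMod p) a) ^ j) b := by
  induction j with
  | zero => simp
  | succ j ih =>
      rw [Function.iterate_succ_apply', ih, pow_succ', Module.End.mul_apply,
        LinearMap.sub_apply, mulLeft_apply, mulRight_apply]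

open LinearMap in
lemma iterate_comm_sum (p : ℕ) (a b : T12 p) (j : ℕ) :
    (fun y : T12 p => a * y - y * a)^[j] b =
      ∑ m ∈ Finset.range (j + 1),
        (((-1 : ZMod p) ^ (j - m) * (Nat.choose j m : ZMod p)) •
          (a ^ m * b * a ^ (j - m))) := by
  rw [iterate_comm_eq]
  have hc0 : Commute (mulLeft (ZMod p) a : Module.End (ZMod p) (T12 p))
      (mulRight (ZMod p) a) := by
    ext x
    simp [Module.End.mul_apply, mul_assoc]
  have hc : Commute (mulLeft (ZMod p) a : Module.End (ZMod p) (T12 p))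
      (-(mulRight (ZMod p) a)) := hc0.neg_right
  rw [sub_eq_add_neg, hc.add_pow]
  rw [LinearMap.coe_sum, Finset.sum_apply]
  apply Finset.sum_congr rfl
  intro m _
  rw [Module.End.mul_apply, Module.End.mul_apply, Module.End.natCast_apply,
    ← Nat.cast_smul_eq_nsmul (ZMod p)]
  have hneg : (-(mulRight (ZMod p) a)) ^ (j - m)
      = (-1 : ZMod p) ^ (j - m) • (mulRight (ZMod p) a) ^ (j - m) := by
    rw [← neg_one_smul (ZMod p) (mulRight (ZMod p) a), smul_pow]
  rw [hneg, pow_mulRight, pow_mulLeft]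
  simp only [map_smul, LinearMap.smul_apply, mulRight_apply, mulLeft_apply,
    smul_mul_assoc, mul_smul_comm, smul_smul]
  rw [mul_assoc]
  ring_nf

lemma choose_cast (p k : ℕ) (hp : p.Prime) :
    ∀ j, j ≤ p ^ k - 1 → ((Nat.choose (p ^ k - 1) j : ZMod p)) = (-1 : ZMod p) ^ j := by
  intro j
  induction j with
  | zero => simp
  | succ j ih =>
      intro hj
      have hpos : 0 < p ^ k := pow_pos hp.pos k
      have h1 : (p ^ k - 1) + 1 = p ^ k := by omega
      have h2 : (p : ℕ) ∣ (p ^ k).choose (j + 1) :=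
        Nat.Prime.dvd_choose_pow hp (by omega) (by omega)
      have h3 : (p ^ k).choose (j + 1)
          = (p ^ k - 1).choose j + (p ^ k - 1).choose (j + 1) := by
        rw [← h1]; exact Nat.choose_succ_succ' _ _
      have h4 : (((p ^ k).choose (j + 1) : ℕ) : ZMod p) = 0 :=
        (ZMod.natCast_eq_zero_iff _ _).2 h2
      rw [h3, Nat.cast_add, ih (by omega)] at h4
      have : ((Nat.choose (p ^ k - 1) (j + 1) : ℕ) : ZMod p) = -(-1 : ZMod p) ^ j := by
        linear_combination h4
      rw [this, pow_succ]
      ring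


/-- In the differential graded tensor algebra `T(u,v)` over `ℤ/p`
(`p` odd) with `|u| = 2n−1`, `|v| = 2n` and derivation `β` with `βv = u`, `βu = 0`, the
iterated graded commutator `τ_k(v) = ad^{p^k−1}(v)(u)` satisfies `β(v^{p^k}) = τ_k(v)`
for all `k ≥ 0`.  Since `|v|` is even, `ad(v)(y) = [v,y] = v·y − y·v` (no Koszul sign). -/
theorem stmt_12 (p r n k : ℕ) (hp : p.Prime) (hodd : Odd p) (hr : 1 ≤ r) (hn : 2 ≤ n) :
    beta12 p ((vv p) ^ (p ^ k)) =
      (fun y : T12 p => vv p * y - y * vv p)^[p ^ k - 1] (uu p) := by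
  have hpos : 0 < p ^ k := pow_pos hp.pos k
  have h1 : (p ^ k - 1) + 1 = p ^ k := by omega
  rw [beta12_v_pow, iterate_comm_sum, h1]
  apply Finset.sum_congr rfl
  intro m hm
  rw [Finset.mem_range] at hm
  have hcm : ((Nat.choose (p ^ k - 1) m : ZMod p)) = (-1 : ZMod p) ^ m :=
    choose_cast p k hp m (by omega)
  have heven : Even (p ^ k - 1) := Nat.Odd.sub_odd (hodd.pow) odd_one
  have hco : (-1 : ZMod p) ^ (p ^ k - 1 - m) * (Nat.choose (p ^ k - 1) m : ZMod p)
      = 1 := by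
    rw [hcm, ← pow_add]
    have : p ^ k - 1 - m + m = p ^ k - 1 := by omega
    rw [this, heven.neg_one_pow]
  rw [hco, one_smul]
end

section
/- Suppose A is a connected graded Z/2-vector space with basis consisting of classes Q₁v (degree 4n−1), v², λ(u,v) (degree 4n−2), uv, Q₁u (degree 4n−3), u² (degree 4n−4), n ≥ 2, carrying Steenrod operations Sq¹_*Q₁v = v², Sq²_*Q₁v = 0, Sq²_*v² = Sq¹_*uv = 0, Sq¹_* and Sq²_* zero on all other listed generators, higher Bockstein β^{(r)}: uv ↦ u², β^{(r+1)}: λ(u,v) ↦ Q₁u (r > 1), and v², Q₁u permanent cycles except as noted. Then A decomposes as a direct sum of two sub-modules-with-operations: span{λ(u,v), Q₁u} ⊕ span{Q₁v, v², uv, u²}, and this matches the homology of P^{4n−2}(2^{r+1}) ∨ X₂ where X₂ has cells in degrees 4n−4, 4n−3, 4n−2, 4n−1. -/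
/-- The mod `2` homology `H_*(D₂(Ω²P^{2n+1}(2^r)); ℤ/2)`, a 6-dimensional `ℤ/2`-vector
space with basis `0 = Q₁v`, `1 = v²`, `2 = λ(u,v)`, `3 = uv`, `4 = Q₁u`, `5 = u²`. -/
abbrev A14 : Type := Fin 6 → ZMod 2

/-- Basis vectors. -/
noncomputable def e14 (i : Fin 6) : A14 := Pi.single i 1

/-- Degrees: `|Q₁v| = 4n−1`, `|v²| = |λ(u,v)| = 4n−2`, `|uv| = |Q₁u| = 4n−3`,
`|u²| = 4n−4`. -/
def deg14 (n : ℕ) : Fin 6 → ℕ :=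
  ![4 * n - 1, 4 * n - 2, 4 * n - 2, 4 * n - 3, 4 * n - 3, 4 * n - 4]

/-- The linear operation determined by its values on the basis. -/
noncomputable def opOf14 (f : Fin 6 → A14) : A14 →ₗ[ZMod 2] A14 :=
  Matrix.mulVecLin (Matrix.of fun i j => f j i)

/-- `Sq¹_*`: `Q₁v ↦ v²` (case `r > 1`), zero on all other listed generators. -/
noncomputable def Sq1 : A14 →ₗ[ZMod 2] A14 :=
  opOf14 (fun j => if j = 0 then e14 1 else 0)

/-- `Sq²_*`: zero (case `r > 1`). -/
noncomputable def Sq2 : A14 →ₗ[ZMod 2] A14 := opOf14 (fun _ => 0)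

/-- The higher Bockstein `β^{(r)}`: `uv ↦ u²`. -/
noncomputable def betaR : A14 →ₗ[ZMod 2] A14 :=
  opOf14 (fun j => if j = 3 then e14 5 else 0)

/-- The higher Bockstein `β^{(r+1)}`: `λ(u,v) ↦ Q₁u`. -/
noncomputable def betaR1 : A14 →ₗ[ZMod 2] A14 :=
  opOf14 (fun j => if j = 2 then e14 4 else 0)

lemma opOf14_apply (g : Fin 6 → A14) (x : A14) :
    opOf14 g x = ∑ j : Fin 6, x j • g j := by
  funext i
  simp [opOf14, Matrix.mulVec, dotProduct, Finset.sum_apply, mul_comm]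

lemma Sq1_apply (x : A14) : Sq1 x = x 0 • e14 1 := by
  rw [Sq1, opOf14_apply]
  simp [Fin.sum_univ_six]

lemma Sq2_apply (x : A14) : Sq2 x = 0 := by
  rw [Sq2, opOf14_apply]; simp

lemma betaR_apply (x : A14) : betaR x = x 3 • e14 5 := by
  rw [betaR, opOf14_apply]
  simp [Fin.sum_univ_six]

lemma betaR1_apply (x : A14) : betaR1 x = x 2 • e14 4 := by
  rw [betaR1, opOf14_apply]
  simp [Fin.sum_univ_six]

lemma mem_spanM (x : A14) (h0 : x 0 = 0) (h1 : x 1 = 0) (h3 : x 3 = 0)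
    (h5 : x 5 = 0) : x ∈ Submodule.span (ZMod 2) {e14 2, e14 4} := by
  have hx : x = x 2 • e14 2 + x 4 • e14 4 := by
    funext i
    fin_cases i <;> simp [e14, Pi.single_apply, h0, h1, h3, h5]
  rw [hx]
  exact Submodule.add_mem _
    (Submodule.smul_mem _ _ (Submodule.subset_span (by simp)))
    (Submodule.smul_mem _ _ (Submodule.subset_span (by simp)))

lemma mem_spanN (x : A14) (h2 : x 2 = 0) (h4 : x 4 = 0) :
    x ∈ Submodule.span (ZMod 2) {e14 0, e14 1, e14 3, e14 5} := by
  have hx : x = x 0 • e14 0 + x 1 • e14 1 + x 3 • e14 3 + x 5 • e14 5 := by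
    funext i
    fin_cases i <;> simp [e14, Pi.single_apply, h2, h4]
  rw [hx]
  refine Submodule.add_mem _ (Submodule.add_mem _ (Submodule.add_mem _ ?_ ?_) ?_) ?_ <;>
    exact Submodule.smul_mem _ _ (Submodule.subset_span (by simp))

lemma spanM_coords (x : A14) (hx : x ∈ Submodule.span (ZMod 2) {e14 2, e14 4}) :
    x 0 = 0 ∧ x 1 = 0 ∧ x 3 = 0 ∧ x 5 = 0 := by
  induction hx using Submodule.span_induction with
  | mem y hy =>
    rcases hy with h | h <;> subst h <;> simp [e14, Pi.single_apply]
  | zero => simp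
  | add y z _ _ hy hz =>
    obtain ⟨a0, a1, a3, a5⟩ := hy; obtain ⟨b0, b1, b3, b5⟩ := hz
    refine ⟨?_, ?_, ?_, ?_⟩ <;> simp [Pi.add_apply, a0, a1, a3, a5, b0, b1, b3, b5]
  | smul c y _ hy =>
    obtain ⟨a0, a1, a3, a5⟩ := hy
    refine ⟨?_, ?_, ?_, ?_⟩ <;> simp [Pi.smul_apply, a0, a1, a3, a5]

lemma spanN_coords (x : A14)
    (hx : x ∈ Submodule.span (ZMod 2) {e14 0, e14 1, e14 3, e14 5}) :
    x 2 = 0 ∧ x 4 = 0 := by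
  induction hx using Submodule.span_induction with
  | mem y hy =>
    rcases hy with h | h | h | h <;> subst h <;> simp [e14, Pi.single_apply]
  | zero => simp
  | add y z _ _ hy hz =>
    obtain ⟨a2, a4⟩ := hy; obtain ⟨b2, b4⟩ := hz
    constructor <;> simp [Pi.add_apply, a2, a4, b2, b4]
  | smul c y _ hy =>
    obtain ⟨a2, a4⟩ := hy
    constructor <;> simp [Pi.smul_apply, a2, a4]

/-- For `r > 1` and `n ≥ 2`, the module
`A = H_*(D₂(Ω²P^{2n+1}(2^r)); ℤ/2)` with basis `Q₁v` (degree `4n−1`), `v²`, `λ(u,v)`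
(degree `4n−2`), `uv`, `Q₁u` (degree `4n−3`), `u²` (degree `4n−4`), with operations
`Sq¹_*Q₁v = v²`, `Sq²_* = 0`, `β^{(r)}uv = u²`, `β^{(r+1)}λ(u,v) = Q₁u` (and zero on the
other listed generators), decomposes as a direct sum of two submodules closed under all
the operations: `span{λ(u,v), Q₁u} ⊕ span{Q₁v, v², uv, u²}`.  This matches the homology
of `P^{4n−2}(2^{r+1}) ∨ X₂`, where the first summand carries the cells of the Moore
space `P^{4n−2}(2^{r+1})` (degrees `4n−2`, `4n−3`) and the second the cells of `X₂`
(degrees `4n−4`, `4n−3`, `4n−2`, `4n−1`). -/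
theorem stmt_14 (n r : ℕ) (hn : 2 ≤ n) (hr : 1 < r) :
    ∃ M N : Submodule (ZMod 2) A14,
      M = Submodule.span (ZMod 2) {e14 2, e14 4} ∧
      N = Submodule.span (ZMod 2) {e14 0, e14 1, e14 3, e14 5} ∧
      IsCompl M N ∧
      (∀ T ∈ ([Sq1, Sq2, betaR, betaR1] : List (A14 →ₗ[ZMod 2] A14)),
        Submodule.map T M ≤ M ∧ Submodule.map T N ≤ N) ∧
      deg14 n 2 = 4 * n - 2 ∧ deg14 n 4 = 4 * n - 3 ∧
      deg14 n 0 = 4 * n - 1 ∧ deg14 n 1 = 4 * n - 2 ∧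
      deg14 n 3 = 4 * n - 3 ∧ deg14 n 5 = 4 * n - 4 := by
  refine ⟨Submodule.span (ZMod 2) {e14 2, e14 4},
    Submodule.span (ZMod 2) {e14 0, e14 1, e14 3, e14 5}, rfl, rfl, ?_, ?_,
    rfl, rfl, rfl, rfl, rfl, rfl⟩
  · constructor
    · rw [disjoint_iff]
      ext x
      simp only [Submodule.mem_inf, Submodule.mem_bot]
      constructor
      · rintro ⟨hM, hN⟩
        obtain ⟨a0, a1, a3, a5⟩ := spanM_coords x hM
        obtain ⟨a2, a4⟩ := spanN_coords x hN
        funext i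
        fin_cases i <;> assumption
      · rintro rfl; exact ⟨Submodule.zero_mem _, Submodule.zero_mem _⟩
    · rw [codisjoint_iff, eq_top_iff]
      intro x _
      have hx : x = (x 2 • e14 2 + x 4 • e14 4) +
          (x 0 • e14 0 + x 1 • e14 1 + x 3 • e14 3 + x 5 • e14 5) := by
        funext i
        fin_cases i <;> simp [e14, Pi.single_apply] <;> ring
      rw [hx]
      refine Submodule.add_mem _ (Submodule.mem_sup_left ?_)
        (Submodule.mem_sup_right ?_)
      · exact Submodule.add_mem _
          (Submodule.smul_mem _ _ (Submodule.subset_span (by simp)))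
          (Submodule.smul_mem _ _ (Submodule.subset_span (by simp)))
      · refine Submodule.add_mem _ (Submodule.add_mem _ (Submodule.add_mem _ ?_ ?_) ?_)
          ?_ <;> exact Submodule.smul_mem _ _ (Submodule.subset_span (by simp))
  · intro T hT
    fin_cases hT
    · constructor
      · rintro y ⟨x, hx, rfl⟩
        obtain ⟨a0, _, _, _⟩ := spanM_coords x hx
        rw [Sq1_apply, a0, zero_smul]
        exact Submodule.zero_mem _
      · rintro y ⟨x, hx, rfl⟩
        rw [Sq1_apply]
        exact mem_spanN _ (by simp [e14, Pi.single_apply]) (by simp [e14, Pi.single_apply])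
    · constructor <;>
      · rintro y ⟨x, hx, rfl⟩
        rw [Sq2_apply]
        exact Submodule.zero_mem _
    · constructor
      · rintro y ⟨x, hx, rfl⟩
        obtain ⟨_, _, a3, _⟩ := spanM_coords x hx
        rw [betaR_apply, a3, zero_smul]
        exact Submodule.zero_mem _
      · rintro y ⟨x, hx, rfl⟩
        rw [betaR_apply]
        exact mem_spanN _ (by simp [e14, Pi.single_apply]) (by simp [e14, Pi.single_apply])
    · constructor
      · rintro y ⟨x, hx, rfl⟩
        rw [betaR1_apply]
        exact Submodule.smul_mem _ _ (Submodule.subset_span (by simp))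
      · rintro y ⟨x, hx, rfl⟩
        obtain ⟨a2, _⟩ := spanN_coords x hx
        rw [betaR1_apply, a2, zero_smul]
        exact Submodule.zero_mem _
end
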